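/- Let w > 0 and h ≥ 2w (a vertical buffer subshelf of width w and height h, where the height-to-width ratio is at least 2), let x₁, …, xₙ be real numbers with w/2 < xᵢ ≤ w for all i, and let x be a real number with w/2 < x ≤ w such that x₁ + ⋯ + xₙ + x > h (the next square does not fit). Then x₁² + ⋯ + xₙ² + x² > (w/2)² + (w/2)·(h/2). (The total area packed into a closed vertical buffer subshelf, counting the overflowing square, is at least (w/2)² plus the area of a slice of width w/2 and height h at density 1/2.) -/

import Mathlib

/-!
Every square has side greater than `w / 2`, so its area `x²` is at least `(w / 2) · x`. Summing,
the packed area is at least `w / 2` times the total height `∑ xᵢ + x > h`, and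
`(w / 2) · h ≥ (w / 2)² + (w / 2) · (h / 2)` because `h ≥ w`.
-/

section OrderedSemiring

variable {R : Type*} [Semiring R] [PartialOrder R] [IsOrderedRing R]

theorem mul_le_sq_of_le {a b : R} (ha : 0 ≤ a) (hab : a ≤ b) : a * b ≤ b ^ 2 := by
  rw [sq]
  exact mul_le_mul_of_nonneg_right hab (ha.trans hab)

theorem Finset.mul_sum_le_sum_sq {ι : Type*} (s : Finset ι) (f : ι → R) {a : R} (ha : 0 ≤ a)
    (hf : ∀ i ∈ s, a ≤ f i) : a * ∑ i ∈ s, f i ≤ ∑ i ∈ s, f i ^ 2 := by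
  rw [Finset.mul_sum]
  exact Finset.sum_le_sum fun i hi => mul_le_sq_of_le ha (hf i hi)

end OrderedSemiring

theorem closed_vertical_buffer_subshelf_density_general (w h : ℝ) (hw : 0 < w) (hh : 2 * w ≤ h)
    (n : ℕ) (xs : Fin n → ℝ) (hxs : ∀ i, w / 2 < xs i ∧ xs i ≤ w)
    (x : ℝ) (hx₁ : w / 2 < x)
    (hover : (∑ i, xs i) + x > h) :
    (∑ i, (xs i) ^ 2) + x ^ 2 > (w / 2) ^ 2 + (w / 2) * (h / 2) := by
  have hw2 : 0 < w / 2 := half_pos hw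
  have harea : w / 2 * ((∑ i, xs i) + x) ≤ (∑ i, xs i ^ 2) + x ^ 2 := by
    rw [mul_add]
    exact add_le_add (Finset.univ.mul_sum_le_sum_sq xs hw2.le fun i _ => (hxs i).1.le)
      (mul_le_sq_of_le hw2.le hx₁.le)
  calc (w / 2) ^ 2 + w / 2 * (h / 2) ≤ w / 2 * h := by nlinarith
    _ < w / 2 * ((∑ i, xs i) + x) := mul_lt_mul_of_pos_left hover hw2
    _ ≤ (∑ i, xs i ^ 2) + x ^ 2 := harea

/-- Closed vertical buffer subshelf density: for a vertical shelf of width `w` and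
height `h ≥ 2w`, packed with squares of side lengths `x₁, …, xₙ ∈ (w/2, w]` stacked
along its height, if a further square of side `x ∈ (w/2, w]` does not fit
(i.e. `x₁ + ⋯ + xₙ + x > h`), then the total packed area, counting the overflowing
square, exceeds `(w/2)² + (w/2)·(h/2)`. -/
theorem closed_vertical_buffer_subshelf_density (w h : ℝ) (hw : 0 < w) (hh : 2 * w ≤ h)
    (n : ℕ) (xs : Fin n → ℝ) (hxs : ∀ i, w / 2 < xs i ∧ xs i ≤ w)
    (x : ℝ) (hx₁ : w / 2 < x) (hx₂ : x ≤ w)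
    (hover : (∑ i, xs i) + x > h) :
    (∑ i, (xs i) ^ 2) + x ^ 2 > (w / 2) ^ 2 + (w / 2) * (h / 2) :=
  closed_vertical_buffer_subshelf_density_general w h hw hh n xs hxs x hx₁ hover
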